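/- For every field F, every k ∈ ℕ and every nonempty finite set V: (1) if γ ∈ P(V^k) is graph-like, then IM_k^F∘γ is graph-like; (2) if k ≥ 2 and γ ∈ P(V^k) is graph-like and IM_k^F-stable, then pr_{k-1} γ is IM_{k-1}^F-stable. -/

import Mathlib

open Classical Matrix

noncomputable section

/-- `k`-tuples of elements of `V`. -/
abbrev Tup (V : Type) (k : ℕ) := Fin k → V

variable {V : Type}

/-- `v⟨i,x⟩` : the tuple obtained from `v` by substituting, for each `s`,
the entry of `v` in position `i s` by `x s`. -/
def substTup {k r : ℕ} (v : Tup V k) (i : Fin r → Fin k) (x : Tup V r) : Tup V k :=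
  fun j => if h : ∃ s, i s = j then x h.choose else v j

/-- `pr_j v = (v_{j 1}, …, v_{j r})`. -/
def prTup {k r : ℕ} (j : Fin r → Fin k) (v : Tup V k) : Tup V r := fun s => v (j s)

/-- `(w_1, …, w_r, w_r, …, w_r) : V^k`. -/
def extendTup [Nonempty V] {r : ℕ} (k : ℕ) (w : Tup V r) : Tup V k := fun i =>
  if h : (i : ℕ) < r then w ⟨i, h⟩
  else if h' : 0 < r then w ⟨r - 1, by omega⟩
  else Classical.arbitrary V

/-- The `r`-projection `pr_r γ` of a labelled partition (presented as a setoid) of `V^k`. -/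
def prPart [Nonempty V] {k : ℕ} (r : ℕ) (γ : Setoid (Tup V k)) : Setoid (Tup V r) where
  r w w' := γ.r (extendTup k w) (extendTup k w')
  iseqv := ⟨fun _ => γ.iseqv.refl _, fun h => γ.iseqv.symm h, fun h h' => γ.iseqv.trans h h'⟩

/-- `v^τ`, the tuple with `i`-th entry `v (τ⁻¹ i)`. -/
def permTup {k : ℕ} (τ : Equiv.Perm (Fin k)) (v : Tup V k) : Tup V k := fun i => v (τ.symm i)

/-- `γ ⪯ ρ` : the partition `ρ` refines the partition `γ`. -/
def Refines {A : Type*} (γ ρ : Setoid A) : Prop := ∀ u v : A, ρ.r u v → γ.r u v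

/-- `γ ≈ ρ` : the partitions mutually refine each other. -/
def PartEquiv {A : Type*} (γ ρ : Setoid A) : Prop := Refines γ ρ ∧ Refines ρ γ

/-- Invariance of a partition of `V^k` under `Sym(k)`. -/
def Invariant {k : ℕ} (γ : Setoid (Tup V k)) : Prop :=
  ∀ u v : Tup V k, γ.r u v → ∀ τ : Equiv.Perm (Fin k), γ.r (permTup τ u) (permTup τ v)

/-- `r`-consistency of a partition of `V^k`. -/
def Consistent [Nonempty V] {k : ℕ} (r : ℕ) (γ : Setoid (Tup V k)) : Prop :=
  ∀ u v : Tup V k, γ.r u v → ∀ j : Fin r → Fin k,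
    (prPart r γ).r (prTup j u) (prTup j v)

/-- Graph-like partitions of `V^k`. -/
def GraphLike [Nonempty V] {k : ℕ} (γ : Setoid (Tup V k)) : Prop :=
  Invariant γ ∧ (∀ r ≤ k, Consistent r γ) ∧
    ∀ u v : Tup V k, γ.r u v → ∀ i j : Fin k, u i = u j → v i = v j

/-- `{x ∈ V^r : γ(u⟨i,x⟩) = φ_i for all i ∈ [k]^(r)}`, where the colour tuple `φ` is
given by representatives. -/
def WLSet {k r : ℕ} (γ : Setoid (Tup V k)) (u : Tup V k)
    (φ : (Fin r → Fin k) → Tup V k) : Set (Tup V r) :=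
  {x | ∀ i : Fin r → Fin k, Function.Injective i → γ.r (substTup u i x) (φ i)}

/-- `{x ∈ V^r : γ(u⟨i,x⟩) = σ}`, where the colour `σ` is given by a representative `w`. -/
def CSet {k r : ℕ} (γ : Setoid (Tup V k)) (u : Tup V k)
    (i : Fin r → Fin k) (w : Tup V k) : Set (Tup V r) :=
  {x | γ.r (substTup u i x) w}

/-- `WL_{k,r}`-stability of a partition of `V^k`. -/
def WLStable {k : ℕ} (r : ℕ) (γ : Setoid (Tup V k)) : Prop :=
  r < k → ∀ u v : Tup V k, γ.r u v →
    ∀ φ : (Fin r → Fin k) → Tup V k, (WLSet γ u φ).ncard = (WLSet γ v φ).ncard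

/-- `C_{k,r}`-stability of a partition of `V^k`. -/
def CStable {k : ℕ} (r : ℕ) (γ : Setoid (Tup V k)) : Prop :=
  r < k → ∀ u v : Tup V k, γ.r u v →
    ∀ i : Fin r → Fin k, Function.Injective i → ∀ w : Tup V k,
      (CSet γ u i w).ncard = (CSet γ v i w).ncard

/-- The matrix `χ^{γ,v}_{i,σ}`, with the colour `σ` given by a representative `w`. -/
def chiMat (F : Type) [Field F] {k : ℕ} (γ : Setoid (Tup V k)) (v : Tup V k)
    (i : Fin 2 → Fin k) (w : Tup V k) : Matrix V V F :=
  Matrix.of fun x y => if γ.r (substTup v i ![x, y]) w then (1 : F) else 0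

/-- The matrix `χ^{γ,v}_φ`, with the colour tuple `φ` given by representatives. -/
def chiMatT (F : Type) [Field F] {k : ℕ} (γ : Setoid (Tup V k)) (v : Tup V k)
    (φ : (Fin 2 → Fin k) → Tup V k) : Matrix V V F :=
  Matrix.of fun x y =>
    if ∀ i : Fin 2 → Fin k, Function.Injective i → γ.r (substTup v i ![x, y]) (φ i)
    then (1 : F) else 0

/-- `IM_k^F`-stability of a partition of `V^k`. -/
def IMStable (F : Type) [Field F] [Fintype V] [DecidableEq V] {k : ℕ}
    (γ : Setoid (Tup V k)) : Prop :=
  2 < k → ∀ u v : Tup V k, γ.r u v →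
    ∀ i : Fin 2 → Fin k, Function.Injective i →
      ∃ S : (Matrix V V F)ˣ, ∀ w : Tup V k,
        (S : Matrix V V F) * chiMat F γ u i w * ((S⁻¹ : (Matrix V V F)ˣ) : Matrix V V F)
          = chiMat F γ v i w

/-- `IMt_k^F`-stability of a partition of `V^k`. -/
def IMtStable (F : Type) [Field F] [Fintype V] [DecidableEq V] {k : ℕ}
    (γ : Setoid (Tup V k)) : Prop :=
  2 < k → ∀ u v : Tup V k, γ.r u v →
    ∃ S : (Matrix V V F)ˣ, ∀ φ : (Fin 2 → Fin k) → Tup V k,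
      (S : Matrix V V F) * chiMatT F γ u φ * ((S⁻¹ : (Matrix V V F)ˣ) : Matrix V V F)
        = chiMatT F γ v φ

/-- The refinement operator `WL_{k,r}`. -/
def WLop {k : ℕ} (r : ℕ) (γ : Setoid (Tup V k)) : Setoid (Tup V k) :=
  if r < k then
    { r := fun u v => γ.r u v ∧ ∀ φ : (Fin r → Fin k) → Tup V k,
        (WLSet γ u φ).ncard = (WLSet γ v φ).ncard
      iseqv := by
        refine ⟨fun u => ⟨γ.iseqv.refl u, fun _ => rfl⟩, ?_, ?_⟩
        · rintro u v ⟨h1, h2⟩; exact ⟨γ.iseqv.symm h1, fun φ => (h2 φ).symm⟩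
        · rintro u v w ⟨h1, h2⟩ ⟨h1', h2'⟩
          exact ⟨γ.iseqv.trans h1 h1', fun φ => (h2 φ).trans (h2' φ)⟩ }
  else γ

/-- The refinement operator `C_{k,r}`. -/
def Cop {k : ℕ} (r : ℕ) (γ : Setoid (Tup V k)) : Setoid (Tup V k) :=
  if r < k then
    { r := fun u v => γ.r u v ∧ ∀ i : Fin r → Fin k, Function.Injective i →
        ∀ w : Tup V k, (CSet γ u i w).ncard = (CSet γ v i w).ncard
      iseqv := by
        refine ⟨fun u => ⟨γ.iseqv.refl u, fun _ _ _ => rfl⟩, ?_, ?_⟩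
        · rintro u v ⟨h1, h2⟩; exact ⟨γ.iseqv.symm h1, fun i hi w => (h2 i hi w).symm⟩
        · rintro u v w ⟨h1, h2⟩ ⟨h1', h2'⟩
          exact ⟨γ.iseqv.trans h1 h1', fun i hi x => (h2 i hi x).trans (h2' i hi x)⟩ }
  else γ


theorem conjRefl {M : Type*} [Monoid M] (A : M) :
    ((1 : Mˣ) : M) * A * (((1 : Mˣ)⁻¹ : Mˣ) : M) = A := by simp

theorem conjSymm {M : Type*} [Monoid M] (S : Mˣ) {A B : M}
    (h : (S : M) * A * ((S⁻¹ : Mˣ) : M) = B) :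
    ((S⁻¹ : Mˣ) : M) * B * (((S⁻¹)⁻¹ : Mˣ) : M) = A := by
  subst h
  rw [inv_inv]
  simp [mul_assoc, Units.inv_mul_cancel_left, Units.inv_mul]

theorem conjTrans {M : Type*} [Monoid M] (S T : Mˣ) {A B C : M}
    (h1 : (S : M) * A * ((S⁻¹ : Mˣ) : M) = B)
    (h2 : (T : M) * B * ((T⁻¹ : Mˣ) : M) = C) :
    ((T * S : Mˣ) : M) * A * (((T * S)⁻¹ : Mˣ) : M) = C := by
  subst h1; subst h2
  simp [Units.val_mul, _root_.mul_inv_rev, mul_assoc]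

/-- The refinement operator `IM_k^F`. -/
def IMop (F : Type) [Field F] [Fintype V] [DecidableEq V] {k : ℕ}
    (γ : Setoid (Tup V k)) : Setoid (Tup V k) :=
  if 2 < k then
    { r := fun u v => γ.r u v ∧ ∀ i : Fin 2 → Fin k, Function.Injective i →
        ∃ S : (Matrix V V F)ˣ, ∀ w : Tup V k,
          (S : Matrix V V F) * chiMat F γ u i w * ((S⁻¹ : (Matrix V V F)ˣ) : Matrix V V F)
            = chiMat F γ v i w
      iseqv := by
        refine ⟨fun u => ⟨γ.iseqv.refl u, fun i _ => ⟨1, fun w => conjRefl _⟩⟩, ?_, ?_⟩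
        · rintro u v ⟨h1, h2⟩
          refine ⟨γ.iseqv.symm h1, fun i hi => ?_⟩
          obtain ⟨S, hS⟩ := h2 i hi
          exact ⟨S⁻¹, fun w => conjSymm S (hS w)⟩
        · rintro u v w ⟨h1, h2⟩ ⟨h1', h2'⟩
          refine ⟨γ.iseqv.trans h1 h1', fun i hi => ?_⟩
          obtain ⟨S, hS⟩ := h2 i hi
          obtain ⟨T, hT⟩ := h2' i hi
          exact ⟨T * S, fun x => conjTrans S T (hS x) (hT x)⟩ }
  else γ

/-- The refinement operator `IMt_k^F`. -/
def IMtop (F : Type) [Field F] [Fintype V] [DecidableEq V] {k : ℕ}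
    (γ : Setoid (Tup V k)) : Setoid (Tup V k) :=
  if 2 < k then
    { r := fun u v => γ.r u v ∧
        ∃ S : (Matrix V V F)ˣ, ∀ φ : (Fin 2 → Fin k) → Tup V k,
          (S : Matrix V V F) * chiMatT F γ u φ * ((S⁻¹ : (Matrix V V F)ˣ) : Matrix V V F)
            = chiMatT F γ v φ
      iseqv := by
        refine ⟨fun u => ⟨γ.iseqv.refl u, ⟨1, fun φ => conjRefl _⟩⟩, ?_, ?_⟩
        · rintro u v ⟨h1, ⟨S, hS⟩⟩
          exact ⟨γ.iseqv.symm h1, ⟨S⁻¹, fun φ => conjSymm S (hS φ)⟩⟩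
        · rintro u v w ⟨h1, ⟨S, hS⟩⟩ ⟨h1', ⟨T, hT⟩⟩
          exact ⟨γ.iseqv.trans h1 h1', ⟨T * S, fun φ => conjTrans S T (hS φ) (hT φ)⟩⟩ }
  else γ

/-- Iterate a refinement operator `|V|^k` times, reaching its stable fixed point. -/
def stabilize [Fintype V] {k : ℕ} (R : Setoid (Tup V k) → Setoid (Tup V k))
    (γ : Setoid (Tup V k)) : Setoid (Tup V k) :=
  R^[Fintype.card V ^ k] γ

/-- A graph on `V` : a labelled partition of `V²` that is a rainbow. -/
def IsGraph (Γ : Setoid (Tup V 2)) : Prop :=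
  (∀ u x y : V, Γ.r ![u, u] ![x, y] → x = y) ∧
  (∀ u v u' v' : V, Γ.r ![u, v] ![u', v'] ↔ Γ.r ![v, u] ![v', u'])

/-- The atomic-type partition `α_{k,Γ}` of `V^k` determined by a graph `Γ`. -/
def atomicPart {k : ℕ} (Γ : Setoid (Tup V 2)) : Setoid (Tup V k) where
  r u v := ∀ i j : Fin k, i ≠ j → Γ.r ![u i, u j] ![v i, v j]
  iseqv := ⟨fun _ _ _ _ => Γ.iseqv.refl _, fun h i j hij => Γ.iseqv.symm (h i j hij),
    fun h h' i j hij => Γ.iseqv.trans (h i j hij) (h' i j hij)⟩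

/-- `WL̄_{k,r}(Γ)`. -/
def WLbarR [Nonempty V] [Fintype V] (k r : ℕ) (Γ : Setoid (Tup V 2)) : Setoid (Tup V 2) :=
  if k ≤ 1 then Γ else prPart 2 (stabilize (WLop (k := k) r) (atomicPart Γ))

/-- `C̄_{k,r}(Γ)`. -/
def CbarR [Nonempty V] [Fintype V] (k r : ℕ) (Γ : Setoid (Tup V 2)) : Setoid (Tup V 2) :=
  if k ≤ 1 then Γ else prPart 2 (stabilize (Cop (k := k) r) (atomicPart Γ))

/-- `WL̄_k(Γ) = WL̄_{k,1}(Γ)`. -/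
def WLbar [Nonempty V] [Fintype V] (k : ℕ) (Γ : Setoid (Tup V 2)) : Setoid (Tup V 2) :=
  WLbarR k 1 Γ

/-- `C̄_k(Γ) = C̄_{k,1}(Γ)`. -/
def Cbar [Nonempty V] [Fintype V] (k : ℕ) (Γ : Setoid (Tup V 2)) : Setoid (Tup V 2) :=
  CbarR k 1 Γ

/-- `IM̄_k^F(Γ)`. -/
def IMbar (F : Type) [Field F] [Nonempty V] [Fintype V] [DecidableEq V]
    (k : ℕ) (Γ : Setoid (Tup V 2)) : Setoid (Tup V 2) :=
  if k ≤ 1 then Γ else prPart 2 (stabilize (IMop (k := k) F) (atomicPart Γ))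

/-- `IMt̄_k^F(Γ)`. -/
def IMtbar (F : Type) [Field F] [Nonempty V] [Fintype V] [DecidableEq V]
    (k : ℕ) (Γ : Setoid (Tup V 2)) : Setoid (Tup V 2) :=
  if k ≤ 1 then Γ else prPart 2 (stabilize (IMtop (k := k) F) (atomicPart Γ))

/-- A nonempty finite set together with a graph on it. -/
structure FinGraph where
  V : Type
  [instFintype : Fintype V]
  [instDecEq : DecidableEq V]
  [instNonempty : Nonempty V]
  Γ : Setoid (Tup V 2)
  isGraph : IsGraph Γ

attribute [instance] FinGraph.instFintype FinGraph.instDecEq FinGraph.instNonempty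

/-! `IM_k^F` compares `u` and `v` through the simultaneous similarity class of the matrices
`χ^{γ,u}_{i,σ}`. The indicator matrix of any `γ`-invariant property of `u⟨i,(x,y)⟩` is a sum of
these, so a matrix `S` conjugating the `χ^{γ,u}_{i,σ}` into the `χ^{γ,v}_{i,σ}` conjugates all
such indicators as well. A graph-like `γ` is closed under reindexing tuples along arbitrary maps
`Fin k → Fin k`, and both reindexing `u` and extending a shorter tuple to length `k` turn
`u⟨i,(x,y)⟩` into `u⟨i',(x,y)⟩ ∘ g` for an injective pair `i'` and a map `g`; membership of the
latter in a colour class is such an invariant property. Hence similarity at `i'` transports to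
the reindexed (resp. projected) tuples at `i`, which gives invariance, consistency, and
stability of the projection. -/

open Finset

section Reindex

variable {k r m : ℕ}

def ReindexClosed (γ : Setoid (Tup V k)) : Prop :=
  ∀ (g : Fin k → Fin k) (z z' : Tup V k), γ.r z z' → γ.r (z ∘ g) (z' ∘ g)

lemma extendTup_self [Nonempty V] (w : Tup V k) : extendTup k w = w := by
  funext t
  simp [extendTup]

lemma extendTup_comp_castLE [Nonempty V] (h : r ≤ k) (w : Tup V r) :
    extendTup k w ∘ Fin.castLE h = w := by
  funext t
  simp [extendTup]

lemma exists_extendTup_eq_comp [Nonempty V] (hr : 0 < r) :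
    ∃ c : Fin k → Fin r, ∀ w : Tup V r, extendTup k w = w ∘ c := by
  refine ⟨fun t => ⟨min t (r - 1), by omega⟩, fun w => funext fun t => ?_⟩
  by_cases ht : (t : ℕ) < r
  · simp only [extendTup, dif_pos ht, Function.comp_apply]
    congr 2
    omega
  · simp only [extendTup, dif_neg ht, dif_pos hr, Function.comp_apply]
    congr 2
    omega

lemma prPart_rel_iff [Nonempty V] (γ : Setoid (Tup V k)) (w w' : Tup V m) :
    (prPart m γ).r w w' ↔ γ.r (extendTup k w) (extendTup k w') :=
  Iff.rfl

lemma GraphLike.reindexClosed [Nonempty V] {γ : Setoid (Tup V k)} (hγ : GraphLike γ) :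
    ReindexClosed γ := by
  intro g z z' h
  have hcons : γ.r (extendTup k (z ∘ g)) (extendTup k (z' ∘ g)) := hγ.2.1 k le_rfl z z' h g
  rwa [extendTup_self, extendTup_self] at hcons

lemma ReindexClosed.invariant {γ : Setoid (Tup V k)} (hγ : ReindexClosed γ) : Invariant γ :=
  fun u v h τ => hγ τ.symm u v h

lemma ReindexClosed.consistent [Nonempty V] {γ : Setoid (Tup V k)} (hγ : ReindexClosed γ)
    (r : ℕ) : Consistent r γ := by
  intro u v h j
  change γ.r (extendTup k (u ∘ j)) (extendTup k (v ∘ j))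
  rcases Nat.eq_zero_or_pos r with rfl | hr
  · rw [Subsingleton.elim (u ∘ j) (v ∘ j)]
  · obtain ⟨c, hc⟩ := exists_extendTup_eq_comp (k := k) (V := V) hr
    rw [hc, hc]
    exact hγ (j ∘ c) u v h

end Reindex

section Substitution

variable {k r m : ℕ}

lemma substTup_apply_of_injective {i : Fin r → Fin k} (hi : Function.Injective i)
    (u : Tup V k) (x : Tup V r) (s : Fin r) : substTup u i x (i s) = x s := by
  have h : ∃ t, i t = i s := ⟨s, rfl⟩
  rw [substTup, dif_pos h, hi h.choose_spec]

lemma substTup_apply_of_forall_ne {i : Fin r → Fin k} {j : Fin k} (hj : ∀ s, i s ≠ j)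
    (u : Tup V k) (x : Tup V r) : substTup u i x j = u j := by
  rw [substTup, dif_neg (not_exists.mpr hj)]

lemma substTup_comp {e : Fin m → Fin k} {i : Fin r → Fin m} {i' : Fin r → Fin k}
    (hi' : Function.Injective i') (havoid : ∀ s t, (∀ s', i s' ≠ t) → i' s ≠ e t)
    (u : Tup V k) (x : Tup V r) :
    substTup (u ∘ e) i x = substTup u i' x ∘ substTup e i i' := by
  funext t
  by_cases h : ∃ s, i s = t
  · simp only [Function.comp_apply, substTup, dif_pos h]
    exact (substTup_apply_of_injective hi' u x _).symm
  · simp only [Function.comp_apply, substTup, dif_neg h]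
    exact (substTup_apply_of_forall_ne (fun s => havoid s t (not_exists.mp h)) u x).symm

lemma substTup_comp_of_injective {e : Fin m → Fin k} (he : Function.Injective e)
    {i : Fin r → Fin m} (hi : Function.Injective i) (u : Tup V k) (x : Tup V r) :
    substTup (u ∘ e) i x = substTup u (e ∘ i) x ∘ substTup e i (e ∘ i) :=
  substTup_comp (he.comp hi) (fun s _ ht h => ht s (he h)) u x

lemma exists_injective_avoiding (e : Fin k → Fin k) {i : Fin r → Fin k}
    (hi : Function.Injective i) :
    ∃ i' : Fin r → Fin k, Function.Injective i' ∧ ∀ s t, (∀ s', i s' ≠ t) → i' s ≠ e t := by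
  set B : Finset (Fin k) := (univ \ univ.image i).image e
  have hrk : r ≤ k := by simpa using Fintype.card_le_of_injective i hi
  have hB : B.card ≤ k - r := by
    refine card_image_le.trans ?_
    rw [card_sdiff_of_subset (subset_univ _), card_image_of_injective _ hi]
    simp
  have hcard : Fintype.card (Fin r) ≤ Fintype.card ↥(univ \ B) := by
    rw [Fintype.card_coe, card_sdiff_of_subset (subset_univ _)]
    simp only [card_univ, Fintype.card_fin]
    omega
  obtain ⟨f⟩ := Function.Embedding.nonempty_of_card_le hcard
  refine ⟨fun s => f s, fun s s' h => f.injective (Subtype.ext h), fun s t ht h => ?_⟩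
  have hfB := (mem_sdiff.mp (f s).2).2
  exact hfB (mem_image.mpr ⟨t, by simpa using ht, h.symm⟩)

end Substitution

section Similarity

variable (F : Type) [Field F] [Fintype V] [DecidableEq V] {k m : ℕ}

def ChiSimilar (γ : Setoid (Tup V k)) (u v : Tup V k) (i : Fin 2 → Fin k) : Prop :=
  ∃ S : (Matrix V V F)ˣ, ∀ w : Tup V k,
    (S : Matrix V V F) * chiMat F γ u i w * ((S⁻¹ : (Matrix V V F)ˣ) : Matrix V V F)
      = chiMat F γ v i w

variable {F}

lemma IMop_rel_iff (hk : 2 < k) {γ : Setoid (Tup V k)} {u v : Tup V k} :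
    (IMop F γ).r u v ↔ γ.r u v ∧ ∀ i, Function.Injective i → ChiSimilar F γ u v i := by
  rw [IMop, if_pos hk]
  rfl

lemma IMop_of_not_lt (hk : ¬2 < k) (γ : Setoid (Tup V k)) : IMop F γ = γ := by
  rw [IMop, if_neg hk]

lemma refines_IMop (γ : Setoid (Tup V k)) : Refines γ (IMop F γ) := by
  intro u v h
  by_cases hk : 2 < k
  · exact ((IMop_rel_iff hk).mp h).1
  · rwa [IMop_of_not_lt hk] at h

/-- Each indicator matrix of a `γ`-invariant property of `u⟨i,(x,y)⟩` is the sum of the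
`χ^{γ,u}_{i,σ}` over the colours `σ` having that property, so one `S` conjugates them all. -/
lemma ChiSimilar.exists_conj_indicator {γ : Setoid (Tup V k)} {u v : Tup V k}
    {i : Fin 2 → Fin k} (h : ChiSimilar F γ u v i) :
    ∃ S : (Matrix V V F)ˣ, ∀ Φ : Tup V k → Prop, (∀ z z', γ.r z z' → (Φ z ↔ Φ z')) →
      (S : Matrix V V F) * Matrix.of (fun x y => if Φ (substTup u i ![x, y]) then 1 else 0) *
          ((S⁻¹ : (Matrix V V F)ˣ) : Matrix V V F)
        = Matrix.of (fun x y => if Φ (substTup v i ![x, y]) then 1 else 0) := by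
  obtain ⟨S, hS⟩ := h
  refine ⟨S, fun Φ hΦ => ?_⟩
  have hsum : ∀ z : Tup V k,
      Matrix.of (fun x y => if Φ (substTup z i ![x, y]) then (1 : F) else 0)
        = ∑ c ∈ univ.filter (fun c : Quotient γ => Φ c.out), chiMat F γ z i c.out := by
    intro z
    ext x y
    simp only [Matrix.of_apply, Matrix.sum_apply, chiMat, ← Quotient.mk_eq_iff_out]
    simp only [sum_ite_eq, mem_filter, mem_univ, true_and]
    exact if_congr (hΦ _ _ (Quotient.mk_out _)).symm rfl rfl
  rw [hsum u, hsum v, mul_sum, sum_mul]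
  exact sum_congr rfl fun c _ => hS _

lemma ChiSimilar.exists_conj_reindexed {γ : Setoid (Tup V k)} (hγ : ReindexClosed γ)
    {u v : Tup V k} {i : Fin 2 → Fin k} (h : ChiSimilar F γ u v i) (g : Fin k → Fin k) :
    ∃ S : (Matrix V V F)ˣ, ∀ w : Tup V k,
      (S : Matrix V V F) *
          Matrix.of (fun x y => if γ.r (substTup u i ![x, y] ∘ g) w then 1 else 0) *
          ((S⁻¹ : (Matrix V V F)ˣ) : Matrix V V F)
        = Matrix.of (fun x y => if γ.r (substTup v i ![x, y] ∘ g) w then 1 else 0) := by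
  obtain ⟨S, hS⟩ := h.exists_conj_indicator
  exact ⟨S, fun w => hS (fun z => γ.r (z ∘ g) w) fun z z' hz =>
    ⟨Setoid.trans' γ (Setoid.symm' γ (hγ g z z' hz)), Setoid.trans' γ (hγ g z z' hz)⟩⟩

end Similarity

section Refinement

variable {F : Type} [Field F] [Fintype V] [DecidableEq V] {k m : ℕ}

lemma ChiSimilar.comp {γ : Setoid (Tup V k)} (hγ : ReindexClosed γ) {u v : Tup V k}
    (h : ∀ i, Function.Injective i → ChiSimilar F γ u v i) (e : Fin k → Fin k)
    {i : Fin 2 → Fin k} (hi : Function.Injective i) : ChiSimilar F γ (u ∘ e) (v ∘ e) i := by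
  obtain ⟨i', hi', havoid⟩ := exists_injective_avoiding e hi
  obtain ⟨S, hS⟩ := (h i' hi').exists_conj_reindexed hγ (substTup e i i')
  refine ⟨S, fun w => ?_⟩
  simpa only [chiMat, substTup_comp hi' havoid] using hS w

lemma ChiSimilar.prPart [Nonempty V] {γ : Setoid (Tup V k)} (hγ : ReindexClosed γ)
    (hmk : m ≤ k) (hm : 0 < m) {w w' : Tup V m} {i : Fin 2 → Fin m}
    (hi : Function.Injective i)
    (h : ChiSimilar F γ (extendTup k w) (extendTup k w') (Fin.castLE hmk ∘ i)) :
    ChiSimilar F (prPart m γ) w w' i := by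
  obtain ⟨c, hc⟩ := exists_extendTup_eq_comp (k := k) (V := V) hm
  set e : Fin m → Fin k := Fin.castLE hmk
  have hsubst : ∀ (z : Tup V m) (x : Tup V 2), extendTup k (substTup z i x)
      = substTup (extendTup k z) (e ∘ i) x ∘ (substTup e i (e ∘ i) ∘ c) := by
    intro z x
    have h := substTup_comp_of_injective (Fin.castLE_injective hmk) hi (extendTup k z) x
    rw [extendTup_comp_castLE] at h
    rw [hc, h]
    rfl
  obtain ⟨S, hS⟩ := h.exists_conj_reindexed hγ (substTup e i (e ∘ i) ∘ c)
  refine ⟨S, fun c' => ?_⟩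
  simpa only [chiMat, prPart_rel_iff, hsubst] using hS (extendTup k c')

lemma ReindexClosed.IMop {γ : Setoid (Tup V k)} (hγ : ReindexClosed γ) :
    ReindexClosed (IMop F γ) := by
  intro g u v h
  by_cases hk : 2 < k
  · rw [IMop_rel_iff hk] at h ⊢
    exact ⟨hγ g u v h.1, fun i hi => ChiSimilar.comp hγ h.2 g hi⟩
  · rw [IMop_of_not_lt hk] at h ⊢
    exact hγ g u v h

lemma GraphLike.IMop [Nonempty V] {γ : Setoid (Tup V k)} (hγ : GraphLike γ) :
    GraphLike (IMop F γ) := by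
  have h := hγ.reindexClosed.IMop (F := F)
  exact ⟨h.invariant, fun r _ => h.consistent r,
    fun u v huv => hγ.2.2 u v (refines_IMop γ u v huv)⟩

lemma partEquiv_prPart_IMop [Nonempty V] {γ : Setoid (Tup V k)} (hγ : ReindexClosed γ)
    (hstab : Refines (IMop F γ) γ) (hmk : m ≤ k) :
    PartEquiv (prPart m γ) (IMop F (prPart m γ)) := by
  refine ⟨refines_IMop _, fun w w' h => ?_⟩
  by_cases hm : 2 < m
  · have hIM := (IMop_rel_iff (by omega)).mp (hstab _ _ h)
    rw [IMop_rel_iff hm]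
    exact ⟨h, fun i hi => .prPart hγ hmk (by omega) hi
      (hIM.2 _ ((Fin.castLE_injective hmk).comp hi))⟩
  · rwa [IMop_of_not_lt hm]

end Refinement

/-- `IM_k^F` is a graph-like refinement operator, and projections of graph-like
fixed points are fixed points. -/
theorem im_refinement_procedure (F : Type) [Field F] (V : Type) [Fintype V]
    [DecidableEq V] [Nonempty V] (k : ℕ) :
    (∀ γ : Setoid (Tup V k), GraphLike γ → GraphLike (IMop F γ)) ∧
    (∀ γ : Setoid (Tup V k), 2 ≤ k → GraphLike γ → PartEquiv γ (IMop F γ) →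
      PartEquiv (prPart (k - 1) γ) (IMop F (prPart (k - 1) γ))) :=
  ⟨fun _ hγ => hγ.IMop, fun _ _ hγ hstab =>
    partEquiv_prPart_IMop hγ.reindexClosed hstab.2 (Nat.sub_le k 1)⟩

end
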